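/- If no quasi-symmetric 2-(37,9,8) design with block intersection numbers 1 and 3 exists, then no quasi-3 design with parameters 2-(149,37,9) and triple intersection numbers 1 and 3 exists. -/

import Mathlib

/-!
A symmetric 2-(v,k,λ) design has every point on exactly `k` blocks, and then any two blocks meet
in exactly `λ` points: for a fixed block `B`, the intersection sizes `|B ∩ B'|` with the other
`v - 1` blocks have mean `λ` and mean square `λ²`, by counting points and ordered pairs of points
of `B`. Hence the blocks `B' ∩ B₀` (`B' ≠ B₀`) form a 2-(37,9,8) design on a fixed block `B₀` of
a symmetric 2-(149,37,9) design, and two of them meet in `|B ∩ B' ∩ B₀|` points, which the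
quasi-3 hypothesis makes 1 or 3.
-/

open Finset

/-- A `t`-`(v,k,lam)` design: `X` is the point set with `v` points, blocks are indexed by the
finite index set `b`, each block `blk i` is a `k`-subset of `X`, and every `t`-subset of `X`
is contained in exactly `lam` blocks. -/
def IsDesign {α ι : Type*} [DecidableEq α] (X : Finset α) (b : Finset ι)
    (blk : ι → Finset α) (v k t lam : ℕ) : Prop :=
  X.card = v ∧ (∀ i ∈ b, blk i ⊆ X ∧ (blk i).card = k) ∧
    ∀ T ⊆ X, T.card = t → (b.filter fun i => T ⊆ blk i).card = lam

namespace Finset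

lemma sum_card_inter_eq_sum_card_filter_mem {ι α : Type*} [DecidableEq α] (S : Finset ι)
    (A : Finset α) (B : ι → Finset α) :
    ∑ i ∈ S, #(A ∩ B i) = ∑ a ∈ A, #{i ∈ S | a ∈ B i} := by
  simp_rw [← filter_mem_eq_inter, card_eq_sum_ones, sum_filter]
  exact sum_comm

lemma eq_of_sum_eq_of_sum_sq_eq {ι R : Type*} [CommRing R] [LinearOrder R]
    [IsStrictOrderedRing R] {s : Finset ι} {f : ι → R} {m : R}
    (h₁ : ∑ i ∈ s, f i = #s * m) (h₂ : ∑ i ∈ s, f i ^ 2 = #s * m ^ 2) {i : ι} (hi : i ∈ s) :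
    f i = m := by
  have hvar : ∑ i ∈ s, (f i - m) ^ 2 = 0 := by
    simp_rw [sub_sq, sum_add_distrib, sum_sub_distrib, ← sum_mul, ← mul_sum, h₁, h₂, sum_const,
      nsmul_eq_mul]
    ring
  have := (sum_eq_zero_iff_of_nonneg fun i _ => sq_nonneg (f i - m)).1 hvar i hi
  exact sub_eq_zero.1 (pow_eq_zero_iff two_ne_zero |>.1 this)

lemma card_filter_apply_mem {α β : Type*} [DecidableEq α] [Fintype β] (g : β ↪ α)
    (A : Finset α) : #{u | g u ∈ A} = #(univ.map g ∩ A) := by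
  rw [← card_map g, ← filter_mem_eq_inter, filter_map]
  rfl

lemma exists_embedding_fin_map_univ_eq {α : Type*} (s : Finset α) :
    ∃ g : Fin #s ↪ α, univ.map g = s := by
  refine ⟨s.equivFin.symm.toEmbedding.trans (Function.Embedding.subtype _), ?_⟩
  ext a
  simp only [mem_map, mem_univ, true_and, Function.Embedding.trans_apply,
    Equiv.coe_toEmbedding, Function.Embedding.subtype_apply]
  exact ⟨fun ⟨u, hu⟩ => hu ▸ (s.equivFin.symm u).2,
    fun ha => ⟨s.equivFin ⟨a, ha⟩, by simp⟩⟩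

end Finset

namespace IsDesign

variable {α ι : Type*} [DecidableEq α] {X : Finset α} {b : Finset ι} {blk : ι → Finset α}
  {v k t lam : ℕ}

lemma card_filter_mem_and_mem (hD : IsDesign X b blk v k 2 lam) {p q : α} (hp : p ∈ X)
    (hq : q ∈ X) (hpq : p ≠ q) : #{i ∈ b | p ∈ blk i ∧ q ∈ blk i} = lam := by
  rw [← hD.2.2 {p, q} (insert_subset hp (singleton_subset_iff.2 hq)) (card_pair hpq)]
  simp only [insert_subset_iff, singleton_subset_iff]

lemma sum_card_filter_mem (hD : IsDesign X b blk v k t lam) :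
    ∑ p ∈ X, #{i ∈ b | p ∈ blk i} = #b * k := by
  rw [← sum_card_inter_eq_sum_card_filter_mem,
    sum_congr rfl fun i hi => by rw [inter_eq_right.2 (hD.2.1 i hi).1, (hD.2.1 i hi).2],
    sum_const, smul_eq_mul]

lemma card_filter_mem_mul (hD : IsDesign X b blk v k 2 lam) {p : α} (hp : p ∈ X) :
    #{i ∈ b | p ∈ blk i} * (k - 1) = lam * (v - 1) := by
  have hblock : ∀ i ∈ {i ∈ b | p ∈ blk i}, #(X.erase p ∩ blk i) = k - 1 := fun i hi => by
    obtain ⟨hib, hpi⟩ := mem_filter.1 hi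
    rw [erase_inter, inter_eq_right.2 (hD.2.1 i hib).1, card_erase_of_mem hpi,
      (hD.2.1 i hib).2]
  have hpoint : ∀ q ∈ X.erase p, #{i ∈ {i ∈ b | p ∈ blk i} | q ∈ blk i} = lam := fun q hq => by
    rw [filter_filter]
    exact hD.card_filter_mem_and_mem hp (mem_of_mem_erase hq) (ne_of_mem_erase hq).symm
  have key := sum_card_inter_eq_sum_card_filter_mem {i ∈ b | p ∈ blk i} (X.erase p) blk
  rw [sum_congr rfl hblock, sum_congr rfl hpoint, sum_const, sum_const, card_erase_of_mem hp,
    hD.1, smul_eq_mul, smul_eq_mul] at key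
  rw [key, mul_comm]

section Symmetric

variable (hD : IsDesign X b blk v k 2 lam) (hb : #b = v) (hk : 2 ≤ k)
include hD hb hk

lemma card_filter_mem_of_card_eq {p : α} (hp : p ∈ X) : #{i ∈ b | p ∈ blk i} = k := by
  have hconst : ∀ q ∈ X, #{i ∈ b | q ∈ blk i} = #{i ∈ b | p ∈ blk i} := fun q hq =>
    Nat.eq_of_mul_eq_mul_right (by omega : 0 < k - 1)
      ((hD.card_filter_mem_mul hq).trans (hD.card_filter_mem_mul hp).symm)
  have hv : 0 < v := hD.1 ▸ card_pos.2 ⟨p, hp⟩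
  have hsum := hD.sum_card_filter_mem
  rw [sum_congr rfl hconst, sum_const, hD.1, hb, smul_eq_mul] at hsum
  exact Nat.eq_of_mul_eq_mul_left hv hsum

lemma mul_sub_one_eq_mul_sub_one {p : α} (hp : p ∈ X) : k * (k - 1) = lam * (v - 1) := by
  rw [← hD.card_filter_mem_mul hp, hD.card_filter_mem_of_card_eq hb hk hp]

lemma card_filter_erase_mem [DecidableEq ι] {j : ι} (hj : j ∈ b) {p : α} (hp : p ∈ blk j) :
    #{i ∈ b.erase j | p ∈ blk i} = k - 1 := by
  rw [filter_erase, card_erase_of_mem (mem_filter.2 ⟨hj, hp⟩),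
    hD.card_filter_mem_of_card_eq hb hk ((hD.2.1 j hj).1 hp)]

lemma sum_card_inter [DecidableEq ι] {j : ι} (hj : j ∈ b) :
    ∑ i ∈ b.erase j, #(blk j ∩ blk i) = lam * (v - 1) := by
  obtain ⟨hBX, hBk⟩ := hD.2.1 j hj
  obtain ⟨p, hp⟩ : (blk j).Nonempty := card_pos.1 (by omega)
  rw [sum_card_inter_eq_sum_card_filter_mem,
    sum_congr rfl fun q hq => hD.card_filter_erase_mem hb hk hj hq, sum_const, hBk,
    smul_eq_mul, hD.mul_sub_one_eq_mul_sub_one hb hk (hBX hp)]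

lemma sum_card_inter_sq [DecidableEq ι] {j : ι} (hj : j ∈ b) :
    ∑ i ∈ b.erase j, #(blk j ∩ blk i) ^ 2 = lam ^ 2 * (v - 1) := by
  obtain ⟨hBX, hBk⟩ := hD.2.1 j hj
  have hpair : ∀ p ∈ blk j, ∀ q ∈ blk j, p ≠ q →
      #{i ∈ b.erase j | p ∈ blk i ∧ q ∈ blk i} = lam - 1 := fun p hp q hq hpq => by
    rw [filter_erase, card_erase_of_mem (mem_filter.2 ⟨hj, hp, hq⟩),
      hD.card_filter_mem_and_mem (hBX hp) (hBX hq) hpq]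
  obtain ⟨p, hp⟩ : (blk j).Nonempty := card_pos.1 (by omega)
  have hkl := hD.mul_sub_one_eq_mul_sub_one hb hk (hBX hp)
  obtain ⟨l, rfl⟩ : ∃ l, lam = l + 1 := Nat.exists_eq_succ_of_ne_zero <| by
    rintro rfl
    simp only [zero_mul, mul_eq_zero] at hkl
    omega
  calc ∑ i ∈ b.erase j, #(blk j ∩ blk i) ^ 2
      = ∑ i ∈ b.erase j, #(blk j ×ˢ blk j ∩ blk i ×ˢ blk i) := by
        simp only [product_inter_product, card_product, sq]
    _ = ∑ p ∈ blk j, ∑ q ∈ blk j, #{i ∈ b.erase j | p ∈ blk i ∧ q ∈ blk i} := by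
        rw [sum_card_inter_eq_sum_card_filter_mem, sum_product]
        simp only [mem_product]
    _ = ∑ p ∈ blk j, ((k - 1) + (k - 1) * l) := sum_congr rfl fun p hp => by
        rw [← add_sum_erase _ _ hp, sum_congr rfl fun q hq =>
            hpair p hp q (mem_of_mem_erase hq) (ne_of_mem_erase hq).symm,
          sum_const, card_erase_of_mem hp, hBk, smul_eq_mul, Nat.add_sub_cancel]
        simp only [and_self, hD.card_filter_erase_mem hb hk hj hp]
    _ = k * (k - 1) * (l + 1) := by rw [sum_const, hBk, smul_eq_mul]; ring
    _ = (l + 1) ^ 2 * (v - 1) := by rw [hkl]; ring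

lemma card_inter_of_card_eq {i j : ι} (hi : i ∈ b) (hj : j ∈ b) (hij : i ≠ j) :
    #(blk i ∩ blk j) = lam := by
  classical
  have hcard : #(b.erase j) = v - 1 := by rw [card_erase_of_mem hj, hb]
  rw [inter_comm]
  refine Nat.cast_injective (R := ℤ) <| eq_of_sum_eq_of_sum_sq_eq (s := b.erase j)
    (f := fun i => (#(blk j ∩ blk i) : ℤ)) ?_ ?_ (mem_erase.2 ⟨hij, hi⟩)
  · rw [hcard, mul_comm]
    exact_mod_cast hD.sum_card_inter hb hk hj
  · rw [hcard, mul_comm]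
    exact_mod_cast hD.sum_card_inter_sq hb hk hj

end Symmetric

lemma derived [DecidableEq ι] (hD : IsDesign X b blk v k t lam) {i₀ : ι} (hi₀ : i₀ ∈ b) {μ : ℕ}
    (hμ : ∀ i ∈ b, i ≠ i₀ → #(blk i ∩ blk i₀) = μ) :
    IsDesign (blk i₀) (b.erase i₀) (fun i => blk i ∩ blk i₀) k μ t (lam - 1) := by
  obtain ⟨-, hblk, hcount⟩ := hD
  obtain ⟨hB₀X, hB₀⟩ := hblk i₀ hi₀
  refine ⟨hB₀, fun i hi => ⟨inter_subset_right, hμ i (mem_of_mem_erase hi) (ne_of_mem_erase hi)⟩,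
    fun T hT hTt => ?_⟩
  have hblocks : {i ∈ b.erase i₀ | T ⊆ blk i ∩ blk i₀} = {i ∈ b | T ⊆ blk i}.erase i₀ := by
    rw [filter_erase]
    simp only [subset_inter_iff, hT, and_true]
  rw [hblocks, card_erase_of_mem (mem_filter.2 ⟨hi₀, hT⟩), hcount T (hT.trans hB₀X) hTt]

lemma comap {β : Type*} [Fintype β] [DecidableEq β] (hD : IsDesign X b blk v k t lam)
    (g : β ↪ α) (hg : univ.map g = X) :
    IsDesign univ b (fun i => {u | g u ∈ blk i}) v k t lam := by
  obtain ⟨hX, hblk, hcount⟩ := hD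
  refine ⟨by rw [← hX, ← hg, card_map], fun i hi => ⟨subset_univ _, ?_⟩, fun T _ hTt => ?_⟩
  · rw [card_filter_apply_mem, hg, inter_eq_right.2 (hblk i hi).1, (hblk i hi).2]
  · rw [← hcount (T.map g) (hg ▸ map_subset_map.2 (subset_univ T)) (by rw [card_map, hTt])]
    congr 1
    refine filter_congr fun i _ => ?_
    simp only [subset_iff, mem_map, mem_filter, mem_univ, true_and, forall_exists_index,
      and_imp, forall_apply_eq_imp_iff₂]

lemma exists_fin (hD : IsDesign X b blk v k t lam) :
    ∃ blk' : ι → Finset (Fin v), IsDesign univ b blk' v k t lam ∧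
      ∀ i ∈ b, ∀ j ∈ b, #(blk' i ∩ blk' j) = #(blk i ∩ blk j) := by
  obtain ⟨g, hg⟩ := exists_embedding_fin_map_univ_eq X
  obtain rfl := hD.1
  refine ⟨_, hD.comap g hg, fun i hi j _ => ?_⟩
  simp_rw [← filter_and, ← mem_inter]
  rw [card_filter_apply_mem, hg, inter_eq_right.2 (inter_subset_left.trans (hD.2.1 i hi).1)]

end IsDesign

/-- If no quasi-symmetric 2-(37,9,8) design with block intersection numbers 1 and 3 exists,
then no quasi-3 design with parameters 2-(149,37,9) and triple intersection numbers 1 and 3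
exists. -/
theorem no_quasi3_149
    (h : ∀ (ι : Type) (b : Finset ι) (blk : ι → Finset (Fin 37)),
      ¬ (IsDesign Finset.univ b blk 37 9 2 8 ∧
        ∀ i ∈ b, ∀ j ∈ b, i ≠ j →
          (blk i ∩ blk j).card = 1 ∨ (blk i ∩ blk j).card = 3)) :
    ∀ (ι : Type) (b : Finset ι) (blk : ι → Finset (Fin 149)),
      ¬ (IsDesign Finset.univ b blk 149 37 2 9 ∧ b.card = 149 ∧
        ∀ i ∈ b, ∀ j ∈ b, ∀ l ∈ b, i ≠ j → i ≠ l → j ≠ l →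
          (blk i ∩ blk j ∩ blk l).card = 1 ∨ (blk i ∩ blk j ∩ blk l).card = 3) := by
  classical
  rintro ι b blk ⟨hD, hb, htriple⟩
  obtain ⟨i₀, hi₀⟩ : b.Nonempty := card_pos.1 (by omega)
  obtain ⟨blk', hD', hinter⟩ := (hD.derived hi₀ fun i hi hii₀ =>
    hD.card_inter_of_card_eq hb (by norm_num) hi hi₀ hii₀).exists_fin
  refine h ι (b.erase i₀) blk' ⟨hD', fun i hi j hj hij => ?_⟩
  rw [hinter i hi j hj, ← inter_inter_distrib_right]
  exact htriple i (mem_of_mem_erase hi) j (mem_of_mem_erase hj) i₀ hi₀ hij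
    (ne_of_mem_erase hi) (ne_of_mem_erase hj)
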